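/- For all octonions a, b: ω(ab) + ω(ba) = ω(a)ω(b) + ω(b)ω(a), where ω is the left 8×8 real matrix representation of octonions. -/

import Mathlib

open Matrix Quaternion
open scoped Quaternion

noncomputable section

/-- Left real matrix representation of a quaternion in the basis 1, i, j, k. -/
def phi (a : ℍ[ℝ]) : Matrix (Fin 4) (Fin 4) ℝ :=
  !![a.re, -a.imI, -a.imJ, -a.imK;
     a.imI, a.re, -a.imK, a.imJ;
     a.imJ, a.imK, a.re, -a.imI;
     a.imK, -a.imJ, a.imI, a.re]

/-- K = diag(1, -1, -1, -1). -/
def Kmat : Matrix (Fin 4) (Fin 4) ℝ := Matrix.diagonal ![1, -1, -1, -1]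

/-- Right real matrix representation of a quaternion: τ(a) = K φ(a)ᵀ K. -/
def tau (a : ℍ[ℝ]) : Matrix (Fin 4) (Fin 4) ℝ := Kmat * (phi a)ᵀ * Kmat

/-- Coordinate vector of a quaternion in the basis 1, i, j, k. -/
def qvec (x : ℍ[ℝ]) : Fin 4 → ℝ := ![x.re, x.imI, x.imJ, x.imK]

/-- The octonions, as pairs of quaternions via the Cayley–Dickson process. -/
abbrev Octo := ℍ[ℝ] × ℍ[ℝ]

/-- Octonion multiplication:
  (a' + a''e)(b' + b''e) = (a'b' − b̄''a'') + (b''a' + a'' b̄')e. -/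
def Omul (a b : Octo) : Octo :=
  (a.1 * b.1 - star b.2 * a.2, b.2 * a.1 + a.2 * star b.1)

/-- Octonion conjugation. -/
def Oconj (a : Octo) : Octo := (star a.1, -a.2)

/-- Real part of an octonion. -/
def Ore (a : Octo) : ℝ := a.1.re

/-- The octonion 1. -/
def Oone : Octo := (1, 0)

/-- Squared norm of an octonion. -/
def OnormSq (a : Octo) : ℝ := Quaternion.normSq a.1 + Quaternion.normSq a.2

/-- Norm of an octonion. -/
def Onorm (a : Octo) : ℝ := Real.sqrt (OnormSq a)

/-- Left real matrix representation of an octonion a = a' + a''e: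
  ω(a) = [[φ(a'), −τ(a'')K], [φ(a'')K, τ(a')]]. -/
def omega (a : Octo) : Matrix (Fin 4 ⊕ Fin 4) (Fin 4 ⊕ Fin 4) ℝ :=
  Matrix.fromBlocks (phi a.1) (-(tau a.2 * Kmat)) (phi a.2 * Kmat) (tau a.1)

/-- Coordinate vector of an octonion in the basis 1, e₁, …, e₇. -/
def ovec (x : Octo) : Fin 4 ⊕ Fin 4 → ℝ := Sum.elim (qvec x.1) (qvec x.2)

/-! ω(a) is the matrix of left multiplication x ↦ ax, so the identity says that
L_{ab} + L_{ba} = L_a L_b + L_b L_a on 𝕆, i.e. (ab)x + (ba)x = a(bx) + b(ax). This is the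
polarization of the left alternative law (aa)x = a(ax); in Cayley–Dickson coordinates it reduces
to quaternion identities that hold because p + p̄ is real, hence central. -/

theorem phi_transpose (a : ℍ[ℝ]) : (phi a)ᵀ = phi (star a) := by
  ext i j
  fin_cases i <;> fin_cases j <;> simp [phi]

theorem phi_mulVec_qvec (a x : ℍ[ℝ]) : phi a *ᵥ qvec x = qvec (a * x) := by
  ext i
  fin_cases i <;>
    simp only [mulVec, dotProduct, phi, qvec, Fin.sum_univ_four, of_apply, cons_val', cons_val,
      cons_val_zero, cons_val_one, cons_val_fin_one, Fin.reduceFinMk, Fin.isValue, Fin.zero_eta,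
      Fin.mk_one, re_mul, imI_mul, imJ_mul, imK_mul] <;>
    ring

theorem Kmat_mulVec_qvec (x : ℍ[ℝ]) : Kmat *ᵥ qvec x = qvec (star x) := by
  ext i
  fin_cases i <;> simp [Kmat, qvec, mulVec_diagonal]

theorem tau_mulVec_qvec (a x : ℍ[ℝ]) : tau a *ᵥ qvec x = qvec (x * a) := by
  rw [tau, ← mulVec_mulVec, ← mulVec_mulVec, Kmat_mulVec_qvec, phi_transpose, phi_mulVec_qvec,
    Kmat_mulVec_qvec, star_mul, star_star, star_star]

theorem qvec_surjective : Function.Surjective qvec := fun v =>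
  ⟨⟨v 0, v 1, v 2, v 3⟩, by ext i; fin_cases i <;> rfl⟩

theorem ovec_surjective : Function.Surjective ovec := fun v => by
  obtain ⟨x₁, hx₁⟩ := qvec_surjective (v ∘ Sum.inl)
  obtain ⟨x₂, hx₂⟩ := qvec_surjective (v ∘ Sum.inr)
  exact ⟨(x₁, x₂), by ext (i | i) <;> simp [ovec, hx₁, hx₂]⟩

theorem qvec_add (x y : ℍ[ℝ]) : qvec (x + y) = qvec x + qvec y := by
  ext i; fin_cases i <;> simp [qvec]

theorem qvec_sub (x y : ℍ[ℝ]) : qvec (x - y) = qvec x - qvec y := by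
  ext i; fin_cases i <;> simp [qvec]

theorem ovec_add (x y : Octo) : ovec (x + y) = ovec x + ovec y := by
  ext (i | i) <;> simp [ovec, qvec_add]

theorem omega_mulVec_ovec (a x : Octo) : omega a *ᵥ ovec x = ovec (Omul a x) := by
  simp only [omega, ovec, Omul, fromBlocks_mulVec, Sum.elim_comp_inl, Sum.elim_comp_inr,
    neg_mulVec, ← mulVec_mulVec, phi_mulVec_qvec, tau_mulVec_qvec, Kmat_mulVec_qvec, qvec_add,
    qvec_sub]
  rw [← sub_eq_add_neg, add_comm (qvec (a.2 * star x.1))]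

theorem Omul_Omul_add_Omul_Omul (a b x : Octo) :
    Omul (Omul a b) x + Omul (Omul b a) x = Omul a (Omul b x) + Omul b (Omul a x) := by
  ext <;>
    simp only [Omul, Prod.fst_add, Prod.snd_add, re_mul, imI_mul, imJ_mul, imK_mul, re_star,
      imI_star, imJ_star, imK_star, re_sub, imI_sub, imJ_sub, imK_sub, re_add, imI_add, imJ_add,
      imK_add] <;>
    ring

theorem Matrix.ext_of_mulVec_ovec {M N : Matrix (Fin 4 ⊕ Fin 4) (Fin 4 ⊕ Fin 4) ℝ}
    (h : ∀ x, M *ᵥ ovec x = N *ᵥ ovec x) : M = N := by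
  refine Matrix.toLin'.injective (LinearMap.ext fun v => ?_)
  obtain ⟨x, rfl⟩ := ovec_surjective v
  exact h x

theorem omega_jordan (a b : Octo) :
    omega (Omul a b) + omega (Omul b a) = omega a * omega b + omega b * omega a := by
  refine Matrix.ext_of_mulVec_ovec fun x => ?_
  simp only [add_mulVec, ← mulVec_mulVec, omega_mulVec_ovec, ← ovec_add, Omul_Omul_add_Omul_Omul]
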